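/- arXiv:1202.0990 — 4 statements merged into one kernel-verified Lean document; each statement's English description precedes it below -/
import Mathlib

section
/- Let r, s, t ∈ (0, 1/2) with t < r + s − 1/2. Then there exists a constant C = C(r,s,t) such that for all doubly-infinite sequences y, z : ℤ → ℂ with finite weighted norms, ‖y * z‖_{H^t} ≤ C ‖y‖_{H^r} ‖z‖_{H^s}, where (y*z)_k = Σ_{l∈ℤ} y_l z_{k−l} and ‖y‖_{H^s}² = Σ_{k∈ℤ} (1+k²)^s |y_k|². -/
/-!
Write `⟨m⟩² = 1 + m²`. Weighted Cauchy–Schwarz at each frequency `k` bounds `|(y * z)_k|²` by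
`(∑_l ⟨l⟩^{-2r} ⟨k-l⟩^{-2s}) · ∑_l ⟨l⟩^{2r} |y_l|² ⟨k-l⟩^{2s} |z_{k-l}|²`.
Since `⟨k⟩² ≤ 4 max(⟨l⟩², ⟨k-l⟩²)` and `t ≤ min(r, s)`, the kernel times `⟨k⟩^{2t}` is at
most `4^t (⟨l⟩^{2(t-r-s)} + ⟨k-l⟩^{2(t-r-s)})`, whose sum over `l` is finite uniformly in `k`
exactly because `2(r+s-t) > 1`. Summing over `k` and exchanging the sums then gives the estimate.
-/

open Real
open scoped ENNReal

namespace ENNReal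

variable {ι : Type*}

theorem tsum_mul_sq_le (f g : ι → ℝ≥0∞) :
    (∑' i, f i * g i) ^ 2 ≤ (∑' i, f i ^ 2) * ∑' i, g i ^ 2 := by
  let _ : MeasurableSpace ι := ⊤
  have holder := lintegral_mul_le_Lp_mul_Lq MeasureTheory.Measure.count
    Real.HolderConjugate.two_two Measurable.of_discrete.aemeasurable
    Measurable.of_discrete.aemeasurable (f := f) (g := g)
  simp only [Pi.mul_apply, MeasureTheory.lintegral_count] at holder
  calc (∑' i, f i * g i) ^ 2
      ≤ ((∑' i, f i ^ (2 : ℝ)) ^ (1 / 2 : ℝ) * (∑' i, g i ^ (2 : ℝ)) ^ (1 / 2 : ℝ)) ^ 2 := by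
        gcongr
    _ = (∑' i, f i ^ 2) * ∑' i, g i ^ 2 := by
        simp only [mul_pow, ← rpow_natCast, ← rpow_mul]
        norm_num

theorem sq_tsum_le_tsum_inv_mul_tsum (w f : ι → ℝ≥0∞) (hw0 : ∀ i, w i ≠ 0)
    (hwtop : ∀ i, w i ≠ ⊤) :
    (∑' i, f i) ^ 2 ≤ (∑' i, (w i)⁻¹) * ∑' i, w i * f i ^ 2 := by
  have hsplit : ∀ i, f i = (w i)⁻¹ ^ (1 / 2 : ℝ) * (w i ^ (1 / 2 : ℝ) * f i) := fun i => by
    rw [← mul_assoc, ← mul_rpow_of_nonneg _ _ (by norm_num),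
      ENNReal.inv_mul_cancel (hw0 i) (hwtop i), one_rpow, one_mul]
  have hsq : ∀ x : ℝ≥0∞, (x ^ (1 / 2 : ℝ)) ^ 2 = x := fun x => by
    rw [← rpow_natCast, ← rpow_mul]
    norm_num
  calc (∑' i, f i) ^ 2
      = (∑' i, (w i)⁻¹ ^ (1 / 2 : ℝ) * (w i ^ (1 / 2 : ℝ) * f i)) ^ 2 := by
        rw [tsum_congr hsplit]
    _ ≤ _ := tsum_mul_sq_le _ _
    _ = (∑' i, (w i)⁻¹) * ∑' i, w i * f i ^ 2 := by simp only [mul_pow, hsq]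

variable {G : Type*} [AddCommGroup G]

theorem tsum_tsum_mul_sub (u v : G → ℝ≥0∞) :
    ∑' k, ∑' l, u l * v (k - l) = (∑' l, u l) * ∑' m, v m := by
  rw [ENNReal.tsum_comm, ← ENNReal.tsum_mul_right]
  refine tsum_congr fun l => ?_
  rw [ENNReal.tsum_mul_left]
  exact congrArg (u l * ·) ((Equiv.subRight l).tsum_eq v)

/-- Weighted Young inequality for convolutions under a Schur-type bound on the kernel. -/
theorem tsum_mul_sq_tsum_mul_sub_le {A B C : G → ℝ≥0∞} (a b : G → ℝ≥0∞)
    (hA0 : ∀ g, A g ≠ 0) (hAtop : ∀ g, A g ≠ ⊤)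
    (hB0 : ∀ g, B g ≠ 0) (hBtop : ∀ g, B g ≠ ⊤)
    {M : ℝ≥0∞} (hM : ∀ k, ∑' l, C k / (A l * B (k - l)) ≤ M) :
    ∑' k, C k * (∑' l, a l * b (k - l)) ^ 2 ≤
      M * ((∑' l, A l * a l ^ 2) * ∑' m, B m * b m ^ 2) := by
  calc ∑' k, C k * (∑' l, a l * b (k - l)) ^ 2
      ≤ ∑' k, C k * ((∑' l, (A l * B (k - l))⁻¹) *
          ∑' l, A l * B (k - l) * (a l * b (k - l)) ^ 2) := by
        gcongr with k
        exact sq_tsum_le_tsum_inv_mul_tsum _ _ (fun l => mul_ne_zero (hA0 l) (hB0 _))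
          (fun l => mul_ne_top (hAtop l) (hBtop _))
    _ = ∑' k, (∑' l, C k / (A l * B (k - l))) *
          ∑' l, A l * a l ^ 2 * (B (k - l) * b (k - l) ^ 2) := by
        refine tsum_congr fun k => ?_
        rw [← mul_assoc, ← ENNReal.tsum_mul_left (a := C k)]
        congr 1
        exact tsum_congr fun l => by ring
    _ ≤ ∑' k, M * ∑' l, A l * a l ^ 2 * (B (k - l) * b (k - l) ^ 2) := by
        gcongr with k
        exact hM k
    _ = M * ((∑' l, A l * a l ^ 2) * ∑' m, B m * b m ^ 2) := by
        rw [ENNReal.tsum_mul_left]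
        exact congrArg (M * ·) (tsum_tsum_mul_sub (fun l => A l * a l ^ 2) fun m => B m * b m ^ 2)

theorem ofReal_mul_norm_sq {E : Type*} [SeminormedAddGroup E] {a : ℝ} (ha : 0 ≤ a) (x : E) :
    ENNReal.ofReal (a * ‖x‖ ^ 2) = ENNReal.ofReal a * ‖x‖ₑ ^ 2 := by
  rw [ENNReal.ofReal_mul ha, ENNReal.ofReal_pow (norm_nonneg _), ofReal_norm]

end ENNReal

theorem tsum_le_of_tsum_ofReal_le {ι : Type*} {f : ι → ℝ} {c : ℝ} (hf : ∀ i, 0 ≤ f i)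
    (hc : 0 ≤ c) (h : ∑' i, ENNReal.ofReal (f i) ≤ ENNReal.ofReal c) : ∑' i, f i ≤ c :=
  calc ∑' i, f i = (∑' i, ENNReal.ofReal (f i)).toReal := by
        rw [ENNReal.tsum_toReal_eq fun _ => ENNReal.ofReal_ne_top]
        simp only [ENNReal.toReal_ofReal (hf _)]
    _ ≤ (ENNReal.ofReal c).toReal := ENNReal.toReal_mono ENNReal.ofReal_ne_top h
    _ = c := ENNReal.toReal_ofReal hc

theorem summable_one_add_int_sq_rpow {e : ℝ} (he : e < -1 / 2) :
    Summable fun l : ℤ => (1 + (l : ℝ) ^ 2) ^ e := by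
  refine Summable.of_norm_bounded_eventually
    (Real.summable_abs_int_rpow (b := -2 * e) (by linarith)) ?_
  filter_upwards [(Set.finite_singleton (0 : ℤ)).compl_mem_cofinite] with l hl
  have hl2 : (0 : ℝ) < (l : ℝ) ^ 2 := by
    have : (l : ℝ) ≠ 0 := Int.cast_ne_zero.mpr hl
    positivity
  rw [Real.norm_of_nonneg (by positivity)]
  calc (1 + (l : ℝ) ^ 2) ^ e ≤ ((l : ℝ) ^ 2) ^ e :=
        rpow_le_rpow_of_nonpos hl2 (by linarith) (by linarith)
    _ = |(l : ℝ)| ^ (-(-2 * e)) := by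
        rw [← sq_abs, ← rpow_natCast, ← rpow_mul (abs_nonneg _)]
        ring_nf

theorem rpow_div_rpow_mul_rpow_le {a b c p q t : ℝ} (hb : 0 < b) (hba : b ≤ a) (hc : 0 ≤ c)
    (hca : c ≤ 4 * a) (ht : 0 ≤ t) (htp : t ≤ p) :
    c ^ t / (a ^ p * b ^ q) ≤ 4 ^ t * b ^ (t - p - q) := by
  have ha : 0 < a := hb.trans_le hba
  calc c ^ t / (a ^ p * b ^ q) ≤ (4 * a) ^ t / (a ^ p * b ^ q) := by gcongr
    _ = 4 ^ t * (a ^ (t - p) / b ^ q) := by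
        rw [mul_rpow (by norm_num) ha.le, rpow_sub ha]
        field_simp
    _ ≤ 4 ^ t * (b ^ (t - p) / b ^ q) := by
        gcongr 4 ^ t * (?_ / _)
        exact rpow_le_rpow_of_nonpos hb hba (by linarith)
    _ = 4 ^ t * b ^ (t - p - q) := by rw [rpow_sub hb _ q]

theorem one_add_sq_rpow_div_le {r s t : ℝ} (ht : 0 ≤ t) (htr : t ≤ r) (hts : t ≤ s)
    (x y : ℝ) :
    (1 + (x + y) ^ 2) ^ t / ((1 + x ^ 2) ^ r * (1 + y ^ 2) ^ s) ≤
      4 ^ t * ((1 + x ^ 2) ^ (t - r - s) + (1 + y ^ 2) ^ (t - r - s)) := by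
  have hxy : 1 + (x + y) ^ 2 ≤ 2 * (1 + x ^ 2) + 2 * (1 + y ^ 2) := by
    nlinarith [sq_nonneg (x - y)]
  rcases le_total (1 + y ^ 2) (1 + x ^ 2) with h | h
  · calc _ ≤ 4 ^ t * (1 + y ^ 2) ^ (t - r - s) :=
          rpow_div_rpow_mul_rpow_le (by positivity) h (by positivity) (by linarith) ht htr
      _ ≤ _ := by gcongr; exact le_add_of_nonneg_left (by positivity)
  · rw [mul_comm, show t - r - s = t - s - r by ring]
    calc _ ≤ 4 ^ t * (1 + x ^ 2) ^ (t - s - r) :=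
          rpow_div_rpow_mul_rpow_le (by positivity) h (by positivity) (by linarith) ht hts
      _ ≤ _ := by gcongr; exact le_add_of_nonneg_right (by positivity)

theorem tsum_ofReal_div_le {r s t : ℝ} (ht : 0 ≤ t) (htr : t ≤ r) (hts : t ≤ s)
    (hrst : 1 / 2 < r + s - t) (k : ℤ) :
    ∑' l : ℤ, ENNReal.ofReal ((1 + (k : ℝ) ^ 2) ^ t) /
        (ENNReal.ofReal ((1 + (l : ℝ) ^ 2) ^ r) *
          ENNReal.ofReal ((1 + ((k - l : ℤ) : ℝ) ^ 2) ^ s)) ≤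
      ENNReal.ofReal (2 * 4 ^ t * ∑' l : ℤ, (1 + (l : ℝ) ^ 2) ^ (t - r - s)) := by
  set g : ℤ → ℝ := fun l => (1 + (l : ℝ) ^ 2) ^ (t - r - s)
  have hg : Summable g := summable_one_add_int_sq_rpow (by linarith)
  have hgk : Summable fun l => g (k - l) := (Equiv.subLeft k).summable_iff.mpr hg
  calc _ ≤ ∑' l, ENNReal.ofReal (4 ^ t * (g l + g (k - l))) := by
        gcongr with l
        rw [← ENNReal.ofReal_mul (by positivity), ← ENNReal.ofReal_div_of_pos (by positivity)]
        apply ENNReal.ofReal_le_ofReal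
        convert one_add_sq_rpow_div_le ht htr hts (l : ℝ) ((k - l : ℤ) : ℝ) using 4
        push_cast
        ring
    _ = ENNReal.ofReal (∑' l, 4 ^ t * (g l + g (k - l))) :=
        (ENNReal.ofReal_tsum_of_nonneg (fun _ => by positivity) ((hg.add hgk).mul_left _)).symm
    _ = _ := by
        have hshift : ∑' l, g (k - l) = ∑' l, g l := (Equiv.subLeft k).tsum_eq g
        rw [tsum_mul_left, hg.tsum_add hgk, hshift]
        ring_nf

/-- Convolution estimate in weighted ℓ² spaces of sequences over ℤ:
for `r, s, t ∈ (0,1/2)` with `t < r + s − 1/2`, there is `C` with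
`‖y * z‖_{H^t} ≤ C ‖y‖_{H^r} ‖z‖_{H^s}`. -/
theorem convolution_weighted_l2 (r s t : ℝ)
    (hr : r ∈ Set.Ioo (0 : ℝ) (1 / 2)) (hs : s ∈ Set.Ioo (0 : ℝ) (1 / 2))
    (ht : t ∈ Set.Ioo (0 : ℝ) (1 / 2)) (hrst : t < r + s - 1 / 2) :
    ∃ C : ℝ, 0 < C ∧ ∀ y z : ℤ → ℂ,
      Summable (fun k : ℤ => ((1 : ℝ) + (k : ℝ) ^ 2) ^ r * ‖y k‖ ^ 2) →
      Summable (fun k : ℤ => ((1 : ℝ) + (k : ℝ) ^ 2) ^ s * ‖z k‖ ^ 2) →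
      Real.sqrt (∑' k : ℤ, ((1 : ℝ) + (k : ℝ) ^ 2) ^ t * ‖∑' l : ℤ, y l * z (k - l)‖ ^ 2) ≤
        C * Real.sqrt (∑' k : ℤ, ((1 : ℝ) + (k : ℝ) ^ 2) ^ r * ‖y k‖ ^ 2) *
          Real.sqrt (∑' k : ℤ, ((1 : ℝ) + (k : ℝ) ^ 2) ^ s * ‖z k‖ ^ 2) := by
  have htr : t ≤ r := by linarith [hs.2]
  have hts : t ≤ s := by linarith [hr.2]
  set S := ∑' l : ℤ, (1 + (l : ℝ) ^ 2) ^ (t - r - s)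
  have hS : 0 < S := (summable_one_add_int_sq_rpow (by linarith)).tsum_pos
    (fun _ => by positivity) 0 (by positivity)
  refine ⟨√(2 * 4 ^ t * S), by positivity, fun y z hy hz => ?_⟩
  rw [← sqrt_mul (by positivity), ← sqrt_mul (by positivity)]
  refine sqrt_le_sqrt (tsum_le_of_tsum_ofReal_le (fun _ => by positivity) (by positivity) ?_)
  rw [ENNReal.ofReal_mul (by positivity), ENNReal.ofReal_mul (by positivity),
    ENNReal.ofReal_tsum_of_nonneg (fun _ => by positivity) hy,
    ENNReal.ofReal_tsum_of_nonneg (fun _ => by positivity) hz, mul_assoc]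
  simp (disch := positivity) only [ENNReal.ofReal_mul_norm_sq]
  calc ∑' k : ℤ, ENNReal.ofReal ((1 + (k : ℝ) ^ 2) ^ t) * ‖∑' l, y l * z (k - l)‖ₑ ^ 2
      ≤ ∑' k : ℤ, ENNReal.ofReal ((1 + (k : ℝ) ^ 2) ^ t) *
          (∑' l, ‖y l‖ₑ * ‖z (k - l)‖ₑ) ^ 2 := by
        gcongr with k
        simpa only [enorm_mul] using enorm_tsum_le_tsum_enorm (f := fun l => y l * z (k - l))
    _ ≤ _ := ENNReal.tsum_mul_sq_tsum_mul_sub_le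
        (A := fun m : ℤ => ENNReal.ofReal ((1 + (m : ℝ) ^ 2) ^ r))
        (B := fun m : ℤ => ENNReal.ofReal ((1 + (m : ℝ) ^ 2) ^ s))
        (C := fun m : ℤ => ENNReal.ofReal ((1 + (m : ℝ) ^ 2) ^ t)) _ _
        (fun _ => by positivity) (fun _ => ENNReal.ofReal_ne_top)
        (fun _ => by positivity) (fun _ => ENNReal.ofReal_ne_top)
        (tsum_ofReal_div_le ht.1.le htr hts (by linarith))
end

section
/- There exists a constant C > 0 such that for all k ∈ ℤ and all r, s, t ∈ (0,1/2) with t < r + s − 1/2, one has Σ_{l∈ℤ} (1+l²)^{−r} (1+(k−l)²)^{−s} ≤ C (1+k²)^{−t}, where C depends only on r, s, t. -/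
/-!
Since `k = l + (k - l)`, one of `1 + l²`, `1 + (k - l)²` is at least `(1 + k²) / 4`; taking `t` off
the exponent of that factor costs `4 ^ t * (1 + k²) ^ (-t)` and leaves two convolutions of the same
shape whose exponents add up to `r + s - t > 1/2`. Such a convolution is bounded uniformly in `k`: by
the weighted AM-GM inequality with weights `α / (α + β)`, `β / (α + β)`, the product
`(1 + l²) ^ (-α) * (1 + (k - l)²) ^ (-β)` is at most a convex combination of
`(1 + l²) ^ (-(α + β))` and `(1 + (k - l)²) ^ (-(α + β))`, and both sum over `l` to the finite
`∑ (1 + l²) ^ (-(α + β))`.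
-/

open Real Filter

noncomputable def bracketWeight (c x : ℝ) : ℝ := (1 + x ^ 2) ^ (-c)

theorem bracketWeight_pos (c x : ℝ) : 0 < bracketWeight c x :=
  rpow_pos_of_pos (by positivity) _

theorem bracketWeight_add (c d x : ℝ) :
    bracketWeight (c + d) x = bracketWeight c x * bracketWeight d x := by
  rw [bracketWeight, bracketWeight, bracketWeight, neg_add, rpow_add (by positivity)]

theorem bracketWeight_rpow (c θ x : ℝ) : bracketWeight c x ^ θ = bracketWeight (c * θ) x := by
  rw [bracketWeight, bracketWeight, ← rpow_mul (by positivity), neg_mul]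

theorem bracketWeight_le_of_le {t x y : ℝ} (ht : 0 ≤ t) (h : 1 + y ^ 2 ≤ 4 * (1 + x ^ 2)) :
    bracketWeight t x ≤ 4 ^ t * bracketWeight t y := by
  have hy : 0 < 1 + y ^ 2 := by positivity
  calc bracketWeight t x ≤ ((1 + y ^ 2) / 4) ^ (-t) :=
        rpow_le_rpow_of_nonpos (by positivity) (by linarith) (by linarith)
    _ = 4 ^ t * bracketWeight t y := by
        rw [div_rpow hy.le (by norm_num), rpow_neg (by norm_num : (0 : ℝ) ≤ 4), div_inv_eq_mul,
          mul_comm, bracketWeight]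

theorem summable_bracketWeight {c : ℝ} (hc : 1 / 2 < c) :
    Summable fun l : ℤ => bracketWeight c l := by
  refine .of_norm_bounded_eventually (summable_abs_int_rpow (b := 2 * c) (by linarith)) ?_
  filter_upwards [eventually_cofinite_ne 0] with l hl
  have hl2 : 0 < (l : ℝ) ^ 2 := sq_pos_of_ne_zero (by exact_mod_cast hl)
  calc ‖bracketWeight c l‖ ≤ ((l : ℝ) ^ 2) ^ (-c) := by
        rw [norm_of_nonneg (bracketWeight_pos c l).le]
        exact rpow_le_rpow_of_nonpos hl2 (by linarith) (by linarith)
    _ = |(l : ℝ)| ^ (-(2 * c)) := by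
        rw [← sq_abs, ← rpow_natCast, ← rpow_mul (abs_nonneg _)]
        norm_num

theorem hasSum_bracketWeight_convex {c a b : ℝ} (hc : 1 / 2 < c) (hab : a + b = 1) (k : ℤ) :
    HasSum (fun l : ℤ => a * bracketWeight c l + b * bracketWeight c (k - l))
      (∑' l : ℤ, bracketWeight c l) := by
  have hsub : HasSum (fun l : ℤ => bracketWeight c (k - l)) (∑' l : ℤ, bracketWeight c l) := by
    simpa [Function.comp_def] using ((Equiv.subLeft k).hasSum_iff
      (f := fun l : ℤ => bracketWeight c l)).2 (summable_bracketWeight hc).hasSum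
  have h := ((summable_bracketWeight hc).hasSum.mul_left a).add (hsub.mul_left b)
  rwa [← add_mul, hab, one_mul] at h

theorem bracketWeight_mul_le {α β : ℝ} (hα : 0 < α) (hβ : 0 < β) (x y : ℝ) :
    bracketWeight α x * bracketWeight β y ≤
      α / (α + β) * bracketWeight (α + β) x + β / (α + β) * bracketWeight (α + β) y := by
  have hαβ : 0 < α + β := by positivity
  have key := geom_mean_le_arith_mean2_weighted (div_pos hα hαβ).le (div_pos hβ hαβ).le
    (bracketWeight_pos (α + β) x).le (bracketWeight_pos (α + β) y).le (by field_simp)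
  rwa [bracketWeight_rpow, bracketWeight_rpow, mul_div_cancel₀ _ hαβ.ne',
    mul_div_cancel₀ _ hαβ.ne'] at key

theorem summable_bracketWeight_mul_sub {α β : ℝ} (hα : 0 < α) (hβ : 0 < β)
    (hαβ : 1 / 2 < α + β) (k : ℤ) :
    Summable fun l : ℤ => bracketWeight α l * bracketWeight β (k - l) :=
  .of_nonneg_of_le (fun l => (mul_pos (bracketWeight_pos _ _) (bracketWeight_pos _ _)).le)
    (fun l => bracketWeight_mul_le hα hβ l (k - l))
    (hasSum_bracketWeight_convex hαβ (by field_simp) k).summable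

theorem tsum_bracketWeight_mul_sub_le_tsum {α β : ℝ} (hα : 0 < α) (hβ : 0 < β)
    (hαβ : 1 / 2 < α + β) (k : ℤ) :
    ∑' l : ℤ, bracketWeight α l * bracketWeight β (k - l) ≤
      ∑' l : ℤ, bracketWeight (α + β) l :=
  hasSum_le (fun l : ℤ => bracketWeight_mul_le hα hβ l (k - l))
    (summable_bracketWeight_mul_sub hα hβ hαβ k).hasSum
    (hasSum_bracketWeight_convex hαβ (by field_simp) k)

theorem bracketWeight_mul_le_split {r s t : ℝ} (ht : 0 ≤ t) (x k : ℝ) :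
    bracketWeight r x * bracketWeight s (k - x) ≤
      4 ^ t * bracketWeight t k * (bracketWeight (r - t) x * bracketWeight s (k - x) +
        bracketWeight r x * bracketWeight (s - t) (k - x)) := by
  have hpos c y := bracketWeight_pos c y
  have h4k : 0 ≤ 4 ^ t * bracketWeight t k := (mul_pos (by positivity) (hpos t k)).le
  rcases le_total (x ^ 2) ((k - x) ^ 2) with h | h
  · have hk : 1 + k ^ 2 ≤ 4 * (1 + (k - x) ^ 2) := by nlinarith [sq_nonneg (2 * x - k)]
    calc bracketWeight r x * bracketWeight s (k - x)
        = bracketWeight t (k - x) * (bracketWeight r x * bracketWeight (s - t) (k - x)) := by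
          rw [← add_sub_cancel t s, bracketWeight_add, add_sub_cancel_left]; ring
      _ ≤ 4 ^ t * bracketWeight t k * (bracketWeight r x * bracketWeight (s - t) (k - x)) :=
          mul_le_mul_of_nonneg_right (bracketWeight_le_of_le ht hk)
            (mul_pos (hpos r x) (hpos (s - t) (k - x))).le
      _ ≤ _ := mul_le_mul_of_nonneg_left
          (le_add_of_nonneg_left (mul_pos (hpos (r - t) x) (hpos s (k - x))).le) h4k
  · have hk : 1 + k ^ 2 ≤ 4 * (1 + x ^ 2) := by nlinarith [sq_nonneg (2 * x - k)]
    calc bracketWeight r x * bracketWeight s (k - x)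
        = bracketWeight t x * (bracketWeight (r - t) x * bracketWeight s (k - x)) := by
          rw [← add_sub_cancel t r, bracketWeight_add, add_sub_cancel_left]; ring
      _ ≤ 4 ^ t * bracketWeight t k * (bracketWeight (r - t) x * bracketWeight s (k - x)) :=
          mul_le_mul_of_nonneg_right (bracketWeight_le_of_le ht hk)
            (mul_pos (hpos (r - t) x) (hpos s (k - x))).le
      _ ≤ _ := mul_le_mul_of_nonneg_left
          (le_add_of_nonneg_right (mul_pos (hpos r x) (hpos (s - t) (k - x))).le) h4k

theorem tsum_bracketWeight_mul_sub_le {r s t : ℝ} (ht : 0 ≤ t) (htr : t < r) (hts : t < s)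
    (hrst : 1 / 2 < r + s - t) (k : ℤ) :
    ∑' l : ℤ, bracketWeight r l * bracketWeight s (k - l) ≤
      2 * 4 ^ t * (∑' l : ℤ, bracketWeight (r + s - t) l) * bracketWeight t k := by
  have hc₁ : 1 / 2 < r - t + s := by linarith
  have hc₂ : 1 / 2 < r + (s - t) := by linarith
  have hsum := summable_bracketWeight_mul_sub (by linarith : 0 < r) (by linarith : 0 < s)
    (by linarith) k
  have hsum₁ := summable_bracketWeight_mul_sub (sub_pos.2 htr) (by linarith) hc₁ k
  have hsum₂ := summable_bracketWeight_mul_sub (by linarith) (sub_pos.2 hts) hc₂ k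
  have hle₁ := tsum_bracketWeight_mul_sub_le_tsum (sub_pos.2 htr) (by linarith) hc₁ k
  have hle₂ := tsum_bracketWeight_mul_sub_le_tsum (by linarith) (sub_pos.2 hts) hc₂ k
  rw [sub_add_eq_add_sub] at hle₁
  rw [← add_sub_assoc] at hle₂
  calc ∑' l : ℤ, bracketWeight r l * bracketWeight s (k - l)
      ≤ ∑' l : ℤ, 4 ^ t * bracketWeight t k *
          (bracketWeight (r - t) l * bracketWeight s (k - l) +
            bracketWeight r l * bracketWeight (s - t) (k - l)) :=
        hsum.tsum_le_tsum (fun l => bracketWeight_mul_le_split ht l k)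
          ((hsum₁.add hsum₂).mul_left _)
    _ = 4 ^ t * bracketWeight t k *
          (∑' l : ℤ, bracketWeight (r - t) l * bracketWeight s (k - l) +
            ∑' l : ℤ, bracketWeight r l * bracketWeight (s - t) (k - l)) := by
        rw [tsum_mul_left, hsum₁.tsum_add hsum₂]
    _ ≤ 4 ^ t * bracketWeight t k *
          (∑' l : ℤ, bracketWeight (r + s - t) l + ∑' l : ℤ, bracketWeight (r + s - t) l) :=
        mul_le_mul_of_nonneg_left (add_le_add hle₁ hle₂)
          (mul_pos (by positivity) (bracketWeight_pos t k)).le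
    _ = _ := by ring

/-- Convolution weight estimate: for `r, s, t ∈ (0,1/2)` with `t < r + s − 1/2`,
there exists `C = C(r,s,t) > 0` such that for all `k ∈ ℤ`,
`Σ_{l∈ℤ} (1+l²)^{−r}(1+(k−l)²)^{−s} ≤ C (1+k²)^{−t}`. -/
theorem convolution_weight_estimate (r s t : ℝ)
    (hr : r ∈ Set.Ioo (0 : ℝ) (1 / 2)) (hs : s ∈ Set.Ioo (0 : ℝ) (1 / 2))
    (ht : t ∈ Set.Ioo (0 : ℝ) (1 / 2)) (hrst : t < r + s - 1 / 2) :
    ∃ C : ℝ, 0 < C ∧ ∀ k : ℤ,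
      ∑' l : ℤ, ((1 : ℝ) + (l : ℝ) ^ 2) ^ (-r) * ((1 : ℝ) + ((k : ℝ) - (l : ℝ)) ^ 2) ^ (-s) ≤
        C * ((1 : ℝ) + (k : ℝ) ^ 2) ^ (-t) := by
  have hc : 1 / 2 < r + s - t := by linarith
  have hS : 0 < ∑' l : ℤ, bracketWeight (r + s - t) l :=
    (summable_bracketWeight hc).tsum_pos (fun l => (bracketWeight_pos _ l).le) 0
      (bracketWeight_pos _ _)
  exact ⟨2 * 4 ^ t * ∑' l : ℤ, bracketWeight (r + s - t) l, by positivity,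
    tsum_bracketWeight_mul_sub_le ht.1.le (by linarith [hs.2]) (by linarith [hr.2]) hc⟩
end

section
/- For every n ≥ 1 and every p ∈ [0,1), Σ_{m=0}^∞ (m+1)^{n−1} p^m ≤ (n−1)!/(1−p)^n. -/
/-- For every `n ≥ 1` and `p ∈ [0,1)`,
`Σ_{m=0}^∞ (m+1)^{n−1} p^m ≤ (n−1)!/(1−p)^n`. -/
theorem series_polylog_bound (n : ℕ) (hn : 1 ≤ n) (p : ℝ) (hp0 : 0 ≤ p) (hp1 : p < 1) :
    ∑' m : ℕ, ((m : ℝ) + 1) ^ (n - 1) * p ^ m ≤ ((n - 1).factorial : ℝ) / (1 - p) ^ n := by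
  set k := n - 1 with hk
  have hkn : k + 1 = n := by omega
  have hr : ‖p‖ < 1 := by rwa [Real.norm_eq_abs, abs_of_nonneg hp0]
  have hle : ∀ m : ℕ, ((m : ℝ) + 1) ^ k * p ^ m
      ≤ (k.factorial : ℝ) * (((m + k).choose k : ℝ) * p ^ m) := by
    intro m
    rw [← mul_assoc]
    apply mul_le_mul_of_nonneg_right _ (pow_nonneg hp0 m)
    have hnat : (m + 1) ^ k ≤ k.factorial * (m + k).choose k := by
      rw [← Nat.descFactorial_eq_factorial_mul_choose]
      have := (m + k).pow_sub_le_descFactorial k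
      simpa [show m + k + 1 - k = m + 1 by omega] using this
    calc ((m : ℝ) + 1) ^ k = (((m + 1) ^ k : ℕ) : ℝ) := by push_cast; ring
      _ ≤ ((k.factorial * (m + k).choose k : ℕ) : ℝ) := by exact_mod_cast hnat
      _ = (k.factorial : ℝ) * ((m + k).choose k : ℝ) := by push_cast; ring
  have hsum2 : Summable (fun m : ℕ => (k.factorial : ℝ) * (((m + k).choose k : ℝ) * p ^ m)) :=
    (summable_choose_mul_geometric_of_norm_lt_one k hr).mul_left _
  have hsum1 : Summable (fun m : ℕ => ((m : ℝ) + 1) ^ k * p ^ m) :=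
    Summable.of_nonneg_of_le
      (fun m => mul_nonneg (by positivity) (pow_nonneg hp0 m)) hle hsum2
  calc ∑' m : ℕ, ((m : ℝ) + 1) ^ k * p ^ m
      ≤ ∑' m : ℕ, (k.factorial : ℝ) * (((m + k).choose k : ℝ) * p ^ m) :=
        Summable.tsum_le_tsum hle hsum1 hsum2
    _ = (k.factorial : ℝ) * (1 / (1 - p) ^ (k + 1)) := by
        rw [tsum_mul_left, tsum_choose_mul_geometric_of_norm_lt_one k hr]
    _ = ((n - 1).factorial : ℝ) / (1 - p) ^ n := by
        rw [hkn]; ring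
end

section
/- Let c₀ > 0, κ > 0 and ε ∈ (0,1) with κc₀|log ε| > 1, and set c_k = c₀(1 + log(1+k)) for k ≥ 0. Then for every d ≥ 0, Σ_{k=0}^d ε^{κ c_k} ≤ ε^{κ c₀} (1 + 1/(κ c₀ |log ε| − 1)), uniformly in d. -/
/-!
Since `ε ^ (a log x) = x ^ (a log ε)`, the `k`-th term equals `ε^{κc₀} (1+k)^{-s}` with
`s = κ c₀ |log ε| > 1`. The tail `∑_{k=1}^{d} (1+k)^{-s}` of this `p`-series is bounded by the
integral `∫₁^{d+1} x^{-s} dx ≤ 1/(s-1)`, because `x ↦ x^{-s}` is antitone.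
-/

open Real

lemma rpow_mul_one_add_log {ε x : ℝ} (hε : 0 < ε) (hx : 0 < x) (a : ℝ) :
    ε ^ (a * (1 + log x)) = ε ^ a * x ^ (a * log ε) := by
  rw [mul_one_add, rpow_add hε, rpow_def_of_pos hε (a * log x), rpow_def_of_pos hx]
  ring_nf

lemma integral_one_rpow_neg_le {s b : ℝ} (hs : 1 < s) (hb : 1 ≤ b) :
    ∫ x in (1 : ℝ)..b, x ^ (-s) ≤ 1 / (s - 1) := by
  have h0 : (0 : ℝ) ∉ Set.uIcc 1 b := by
    rw [Set.uIcc_of_le hb]; exact fun h => by linarith [h.1]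
  rw [integral_rpow (Or.inr ⟨by linarith, h0⟩), one_rpow,
    ← neg_div_neg_eq, neg_sub, neg_add_eq_sub, neg_sub]
  gcongr
  linarith [rpow_nonneg (zero_le_one.trans hb) (1 - s)]

lemma sum_range_one_add_rpow_neg_le {s : ℝ} (hs : 1 < s) (d : ℕ) :
    ∑ k ∈ Finset.range (d + 1), (1 + (k : ℝ)) ^ (-s) ≤ 1 + 1 / (s - 1) := by
  have hanti : AntitoneOn (fun x : ℝ => x ^ (-s)) (Set.Icc 1 (1 + d)) :=
    fun x hx y _ hxy => rpow_le_rpow_of_nonpos (by linarith [hx.1]) hxy (by linarith)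
  have htail := hanti.sum_le_integral.trans (integral_one_rpow_neg_le hs (by simp))
  rw [Finset.sum_range_succ', Nat.cast_zero, add_zero, one_rpow, add_comm _ (1 : ℝ)]
  exact add_le_add_right htail 1

theorem log_weight_sum_bound_general (c₀ κ ε : ℝ)
    (hε : ε ∈ Set.Ioo (0 : ℝ) 1) (hbig : 1 < κ * c₀ * |Real.log ε|) :
    ∀ d : ℕ,
      ∑ k ∈ Finset.range (d + 1), ε ^ (κ * (c₀ * (1 + Real.log (1 + (k : ℝ))))) ≤
        ε ^ (κ * c₀) * (1 + 1 / (κ * c₀ * |Real.log ε| - 1)) := by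
  intro d
  obtain ⟨hε0, hε1⟩ := hε
  have hterm (k : ℕ) : ε ^ (κ * (c₀ * (1 + log (1 + (k : ℝ))))) =
      ε ^ (κ * c₀) * (1 + (k : ℝ)) ^ (-(κ * c₀ * |log ε|)) := by
    rw [← mul_assoc, rpow_mul_one_add_log hε0 (by positivity), abs_of_neg (log_neg hε0 hε1),
      mul_neg, neg_neg]
  rw [Finset.sum_congr rfl fun k _ => hterm k, ← Finset.mul_sum]
  exact mul_le_mul_of_nonneg_left (sum_range_one_add_rpow_neg_le hbig d) (rpow_nonneg hε0.le _)

/-- Summation estimate: with `c_k = c₀(1 + log(1+k))` and `κ c₀ |log ε| > 1`,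
`Σ_{k=0}^d ε^{κ c_k} ≤ ε^{κ c₀} (1 + 1/(κ c₀ |log ε| − 1))`, uniformly in `d`. -/
theorem log_weight_sum_bound (c₀ κ ε : ℝ) (hc₀ : 0 < c₀) (hκ : 0 < κ)
    (hε : ε ∈ Set.Ioo (0 : ℝ) 1) (hbig : 1 < κ * c₀ * |Real.log ε|) :
    ∀ d : ℕ,
      ∑ k ∈ Finset.range (d + 1), ε ^ (κ * (c₀ * (1 + Real.log (1 + (k : ℝ))))) ≤
        ε ^ (κ * c₀) * (1 + 1 / (κ * c₀ * |Real.log ε| - 1)) :=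
  log_weight_sum_bound_general c₀ κ ε hε hbig
end
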